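/- Let S be a pseudo-regular subspace of a Krein space (H,J). The group U_S = {U ∈ U_J : U(S) = S} of J-unitary operators leaving S invariant acts transitively on the set Q_S of J-normal projections with range S: for any Q, Q₀ ∈ Q_S there exists U ∈ U_S with Q = U Q₀ U^#. -/

import Mathlib

/-!
Idempotents `Q`, `Q₀` with the same range satisfy `Q Q₀ = Q₀` and `Q₀ Q = Q`; applying `#` gives
`Q^# Q₀^# = Q^#` and `Q₀^# Q^# = Q₀^#`, and `J`-normality says that `Q` commutes with `Q^#` and
`Q₀` with `Q₀^#`. In any ring these six relations alone make
`U = -1 + Q + Q₀ + Q^# + Q₀^# + Q^# Q₀ - Q Q^# - Q Q₀^# - Q₀ Q₀^#`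
invertible, its inverse being the same expression with the roles of `Q` and `Q₀` exchanged, which
is exactly `U^#`; they also give `U Q₀ = Q U`. So `U` is `J`-unitary, `U Q₀ U^# = Q`, and `U` maps
`R(Q₀)` onto `R(Q)`.
-/

open ContinuousLinearMap

variable {H : Type*} [NormedAddCommGroup H] [InnerProductSpace ℂ H] [CompleteSpace H]

/-- The `J`-adjoint `T^# = J T* J`. -/
noncomputable def sharp (J T : H →L[ℂ] H) : H →L[ℂ] H :=
  J ∘L (ContinuousLinearMap.adjoint T) ∘L J

theorem IsIdempotentElem.of_mul_eq_right {M : Type*} [Semigroup M] {x y : M} (hxy : x * y = y)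
    (hyx : y * x = x) : IsIdempotentElem x := calc
  x * x = x * y * x := by rw [mul_assoc, hyx]
  _ = x := by rw [hxy, hyx]

theorem IsIdempotentElem.of_mul_eq_left {M : Type*} [Semigroup M] {x y : M} (hxy : x * y = x)
    (hyx : y * x = y) : IsIdempotentElem x := calc
  x * x = x * y * x := by rw [hxy]
  _ = x := by rw [mul_assoc, hyx, hxy]

theorem mul_mul_eq_of_mul_eq {M : Type*} [Semigroup M] {x y z : M} (h : x * y = z) (t : M) :
    x * (y * t) = z * t := by
  rw [← mul_assoc, h]

theorem mul_mul_mul_eq_of_mul_mul_eq {M : Type*} [Semigroup M] {x y z w : M}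
    (h : x * (y * z) = w) (t : M) : x * (y * (z * t)) = w * t := by
  rw [← mul_assoc y, ← mul_assoc x, h]

section Transporter

variable {R : Type*} [Ring R] {q r a b : R}

def transporter (q r a b : R) : R :=
  -1 + q + r + a + b + a * r - q * a - q * b - r * b

theorem transporter_mul_transporter_swap (hqr : q * r = r) (hrq : r * q = q)
    (hab : a * b = a) (hba : b * a = b) (haq : a * q = q * a) (hbr : b * r = r * b) :
    transporter q r a b * transporter r q b a = 1 := by
  have hqq : q * q = q := IsIdempotentElem.of_mul_eq_right hqr hrq
  have hrr : r * r = r := IsIdempotentElem.of_mul_eq_right hrq hqr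
  have haa : a * a = a := IsIdempotentElem.of_mul_eq_left hab hba
  have hbb : b * b = b := IsIdempotentElem.of_mul_eq_left hba hab
  -- Closing the relations under overlaps (Knuth–Bendix) gives these four extra rewrite rules;
  -- with them, rewriting to right-associated normal forms is confluent.
  have hqar : q * (a * r) = a * r := by rw [← mul_assoc, ← haq, mul_assoc, hqr]
  have hrbq : r * (b * q) = b * q := by rw [← mul_assoc, ← hbr, mul_assoc, hrq]
  have harb : a * (r * b) = a * r := by rw [← hbr, ← mul_assoc, hab]
  have hbqa : b * (q * a) = b * q := by rw [← haq, ← mul_assoc, hba]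
  simp only [transporter, mul_add, add_mul, sub_mul, mul_sub, mul_neg, neg_mul, one_mul, mul_one,
    mul_assoc, hqq, hrr, haa, hbb, hqr, hrq, hab, hba, haq, hbr, hqar, hrbq, harb, hbqa,
    mul_mul_eq_of_mul_eq hqq, mul_mul_eq_of_mul_eq hrr, mul_mul_eq_of_mul_eq hbb,
    mul_mul_eq_of_mul_eq hqr, mul_mul_eq_of_mul_eq hrq, mul_mul_eq_of_mul_eq hab,
    mul_mul_eq_of_mul_eq haq, mul_mul_eq_of_mul_eq hbr, mul_mul_mul_eq_of_mul_mul_eq hqar]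
  abel

theorem transporter_mul_right (hqr : q * r = r) (hrq : r * q = q) (haq : a * q = q * a)
    (hbr : b * r = r * b) : transporter q r a b * r = q * transporter q r a b := by
  have hqq : q * q = q := IsIdempotentElem.of_mul_eq_right hqr hrq
  have hrr : r * r = r := IsIdempotentElem.of_mul_eq_right hrq hqr
  have hqar : q * (a * r) = a * r := by rw [← mul_assoc, ← haq, mul_assoc, hqr]
  simp only [transporter, add_mul, sub_mul, mul_add, mul_sub, neg_mul, mul_neg, one_mul, mul_one,
    mul_assoc, hqq, hrr, hqr, hbr, hqar, mul_mul_eq_of_mul_eq hqq, mul_mul_eq_of_mul_eq hrr,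
    mul_mul_eq_of_mul_eq hqr]
  abel

end Transporter

section Sharp

variable {J : H →L[ℂ] H}

theorem sharp_add (X Y : H →L[ℂ] H) : sharp J (X + Y) = sharp J X + sharp J Y := by
  simp [sharp, add_comp, comp_add]

theorem sharp_neg (X : H →L[ℂ] H) : sharp J (-X) = -sharp J X := by
  simp [sharp]

theorem sharp_sub (X Y : H →L[ℂ] H) : sharp J (X - Y) = sharp J X - sharp J Y := by
  simp only [sub_eq_add_neg, sharp_add, sharp_neg]

theorem sharp_mul (hJ2 : J ∘L J = 1) (X Y : H →L[ℂ] H) :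
    sharp J (X * Y) = sharp J Y * sharp J X := by
  simp only [sharp, mul_def, adjoint_comp, comp_assoc]
  rw [← comp_assoc J J, hJ2, one_def, id_comp]

theorem sharp_one (hJ2 : J ∘L J = 1) : sharp J 1 = 1 := by
  simp [sharp, one_def, adjoint_id, hJ2]

theorem sharp_sharp (hJsa : adjoint J = J) (hJ2 : J ∘L J = 1) (X : H →L[ℂ] H) :
    sharp J (sharp J X) = X := by
  simp only [sharp, adjoint_comp, adjoint_adjoint, hJsa, comp_assoc]
  rw [← comp_assoc J J, hJ2, one_def, id_comp, comp_id]

theorem sharp_transporter (hJsa : adjoint J = J) (hJ2 : J ∘L J = 1) (X Y : H →L[ℂ] H) :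
    sharp J (transporter X Y (sharp J X) (sharp J Y)) =
      transporter Y X (sharp J Y) (sharp J X) := by
  simp only [transporter, sharp_add, sharp_sub, sharp_neg, sharp_one hJ2, sharp_mul hJ2,
    sharp_sharp hJsa hJ2]
  abel

end Sharp

theorem ContinuousLinearMap.IsIdempotentElem.mul_eq_right_of_range_le {R M : Type*} [Ring R]
    [TopologicalSpace M] [AddCommGroup M] [Module R M] {p q : M →L[R] M}
    (hp : IsIdempotentElem p)
    (h : LinearMap.range (q : M →ₗ[R] M) ≤ LinearMap.range (p : M →ₗ[R] M)) : p * q = q :=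
  coe_injective <| (LinearMap.IsIdempotentElem.comp_eq_right_iff hp.toLinearMap _).2 h

theorem LinearMap.map_range_eq_of_comp_eq {R M : Type*} [Ring R] [AddCommGroup M] [Module R M]
    {u p q : M →ₗ[R] M} (hu : Function.Surjective u) (h : u ∘ₗ p = q ∘ₗ u) :
    (range p).map u = range q := by
  rw [← range_comp, h, range_comp_of_range_eq_top _ (range_eq_top.2 hu)]

/-- The group `U_S` of `J`-unitaries leaving `S` invariant acts transitively on the set of
`J`-normal projections with range `S`. -/
theorem stmt12 (J : H →L[ℂ] H)
    (hJsa : ContinuousLinearMap.adjoint J = J) (hJ2 : J ∘L J = 1)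
    (S : Submodule ℂ H) (Q Q₀ : H →L[ℂ] H)
    (hQ : Q ∘L Q = Q) (hQn : Q ∘L sharp J Q = sharp J Q ∘L Q)
    (hQS : LinearMap.range (Q : H →ₗ[ℂ] H) = S)
    (hQ₀ : Q₀ ∘L Q₀ = Q₀) (hQ₀n : Q₀ ∘L sharp J Q₀ = sharp J Q₀ ∘L Q₀)
    (hQ₀S : LinearMap.range (Q₀ : H →ₗ[ℂ] H) = S) :
    ∃ U : H →L[ℂ] H, U ∘L sharp J U = 1 ∧ sharp J U ∘L U = 1 ∧
      Submodule.map (U : H →ₗ[ℂ] H) S = S ∧ Q = U ∘L Q₀ ∘L sharp J U := by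
  have hQQ₀ : Q * Q₀ = Q₀ := IsIdempotentElem.mul_eq_right_of_range_le hQ (by rw [hQS, hQ₀S])
  have hQ₀Q : Q₀ * Q = Q := IsIdempotentElem.mul_eq_right_of_range_le hQ₀ (by rw [hQS, hQ₀S])
  have hab : sharp J Q * sharp J Q₀ = sharp J Q := by rw [← sharp_mul hJ2, hQ₀Q]
  have hba : sharp J Q₀ * sharp J Q = sharp J Q₀ := by rw [← sharp_mul hJ2, hQQ₀]
  set U := transporter Q Q₀ (sharp J Q) (sharp J Q₀)
  have hUsharp : sharp J U = transporter Q₀ Q (sharp J Q₀) (sharp J Q) :=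
    sharp_transporter hJsa hJ2 Q Q₀
  have hUV : U * sharp J U = 1 := hUsharp ▸
    transporter_mul_transporter_swap hQQ₀ hQ₀Q hab hba hQn.symm hQ₀n.symm
  have hVU : sharp J U * U = 1 := hUsharp ▸
    transporter_mul_transporter_swap hQ₀Q hQQ₀ hba hab hQ₀n.symm hQn.symm
  have hUQ₀ : U * Q₀ = Q * U := transporter_mul_right hQQ₀ hQ₀Q hQn.symm hQ₀n.symm
  refine ⟨U, hUV, hVU, ?_, ?_⟩
  · have hU : Function.Surjective U := fun y => ⟨sharp J U y, DFunLike.congr_fun hUV y⟩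
    have := LinearMap.map_range_eq_of_comp_eq hU (congrArg toLinearMap hUQ₀)
    rwa [hQS, hQ₀S] at this
  · calc Q = Q * (U * sharp J U) := by rw [hUV, mul_one]
      _ = U * (Q₀ * sharp J U) := by rw [← mul_assoc, ← hUQ₀, mul_assoc]
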